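/- arXiv:2303.10786 — 2 statements merged into one kernel-verified Lean document; each statement's English description precedes it below -/
import Mathlib

section
/- For every [a:b] ∈ ℂℙ¹ and every [c:d] ∈ ℂℙ¹ with [c:d] ≠ [a:b], the span of (bX−aY)³ and (dX−cY)(bX−aY)² equals the set of all elements of V divisible by (bX−aY)²; in particular this span does not depend on the choice of [c:d], and it is a Lagrangian of V. -/
noncomputable section

open MvPolynomial

/-- The polynomial ring `ℂ[X,Y]`. -/
abbrev P2 : Type := MvPolynomial (Fin 2) ℂ

/-- The variable `X`. -/
def Xv : P2 := X 0

/-- The variable `Y`. -/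
def Yv : P2 := X 1

/-- `V`: the space of homogeneous cubic polynomials in `X, Y`. -/
def Vcubic : Submodule ℂ P2 := homogeneousSubmodule (Fin 2) ℂ 3

/-- The coefficient of `X^i Y^j`. -/
def cf (i j : ℕ) (p : P2) : ℂ := coeff (Finsupp.single 0 i + Finsupp.single 1 j) p

/-- The alternating bilinear form `ω` with `ω(X³,Y³) = 1`, `ω(X²Y,XY²) = -1/3`,
all other pairings of distinct basis vectors being `0`. -/
def omegaForm (p q : P2) : ℂ :=
  cf 3 0 p * cf 0 3 q - cf 0 3 p * cf 3 0 q
    - (1 / 3) * (cf 2 1 p * cf 1 2 q - cf 1 2 p * cf 2 1 q)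

/-- The linear form `b X - a Y` associated to the point `[a : b] ∈ ℂℙ¹`. -/
def lf (a b : ℂ) : P2 := C b * Xv - C a * Yv

/-- A Lagrangian of `V`: a 2-dimensional subspace contained in `V` on which `ω` vanishes. -/
def IsLagrangian (W : Submodule ℂ P2) : Prop :=
  W ≤ Vcubic ∧ Module.finrank ℂ W = 2 ∧ ∀ p ∈ W, ∀ q ∈ W, omegaForm p q = 0

/-- A perfect cube: a nonzero element of the form `c • (bX - aY)³`. -/
def IsPerfectCube (p : P2) : Prop :=
  ∃ c a b : ℂ, c ≠ 0 ∧ (a ≠ 0 ∨ b ≠ 0) ∧ p = C c * lf a b ^ 3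

/-- The action of `SL(2,ℂ)` on `ℂ[X,Y]` by linear substitution of the variables. -/
def subst (g : Matrix.SpecialLinearGroup (Fin 2) ℂ) : P2 →ₐ[ℂ] P2 :=
  aeval (fun i => C (g.1 i 0) * Xv + C (g.1 i 1) * Yv)

/-- The induced action of `SL(2,ℂ)` on subspaces of `ℂ[X,Y]`. -/
def mapAct (g : Matrix.SpecialLinearGroup (Fin 2) ℂ) (W : Submodule ℂ P2) :
    Submodule ℂ P2 :=
  W.map (subst g).toLinearMap

/-- The `SL(2,ℂ)`-orbit of a subspace. -/
def slOrbit (W₀ : Submodule ℂ P2) : Set (Submodule ℂ P2) := {W | ∃ g, W = mapAct g W₀}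

/-! Write `L = bX - aY` and `M = dX - cY`. Since `ad - bc ≠ 0`, `L` and `M` form a basis of the
linear forms `V₁`, so the span of `L³ = L² · L` and `M L²` is `L² · V₁`, which does not depend
on `M`. A cubic divisible by `L²` has a linear cofactor (the degree-one homogeneous component of
any cofactor), so `L² · V₁` is exactly the set of cubics divisible by `L²`. It is
2-dimensional because multiplication by `L² ≠ 0` is injective, and `ω(L² ℓ, L² ℓ') = 0` is a
direct computation of coefficients. -/

namespace MvPolynomial

variable {σ R : Type*} [CommSemiring R]

section Graded

attribute [local instance] gradedAlgebra

theorem IsHomogeneous.homogeneousComponent_mul {L : MvPolynomial σ R} {m n : ℕ}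
    (hL : L.IsHomogeneous m) (hmn : m ≤ n) (q : MvPolynomial σ R) :
    homogeneousComponent n (L * q) = L * homogeneousComponent (n - m) q := by
  have := DirectSum.coe_decompose_mul_of_left_mem_of_le (homogeneousSubmodule σ R)
    (b := q) (n := n) ((mem_homogeneousSubmodule m L).mpr hL) hmn
  rwa [← decomposition.decompose'_apply, ← decomposition.decompose'_apply]

end Graded

theorem IsHomogeneous.mem_map_mulLeft_iff {L p : MvPolynomial σ R} {m : ℕ}
    (hL : L.IsHomogeneous m) (n : ℕ) :
    p ∈ (homogeneousSubmodule σ R n).map (LinearMap.mulLeft R L) ↔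
      p ∈ homogeneousSubmodule σ R (m + n) ∧ L ∣ p := by
  constructor
  · rintro ⟨q, hq, rfl⟩
    exact ⟨(mem_homogeneousSubmodule _ _).mpr (hL.mul hq), dvd_mul_right L q⟩
  · rintro ⟨hp, q, rfl⟩
    refine ⟨homogeneousComponent n q, homogeneousComponent_mem n q, ?_⟩
    have := hL.homogeneousComponent_mul (Nat.le_add_right m n) q
    rw [homogeneousComponent_of_mem hp, if_pos rfl, Nat.add_sub_cancel_left] at this
    exact this.symm

end MvPolynomial

theorem lf_isHomogeneous (a b : ℂ) : (lf a b).IsHomogeneous 1 :=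
  (isHomogeneous_C_mul_X b 0).sub (isHomogeneous_C_mul_X a 1)

theorem smul_lf_add_smul_lf (s t a b c d : ℂ) :
    s • lf a b + t • lf c d = lf (s * a + t * c) (s * b + t * d) := by
  simp only [lf, smul_eq_C_mul, map_add, map_mul]
  ring

theorem lf_eq_zero_iff {a b : ℂ} : lf a b = 0 ↔ a = 0 ∧ b = 0 := by
  refine ⟨fun h => ⟨?_, ?_⟩, fun ⟨ha, hb⟩ => by simp [lf, ha, hb]⟩
  · simpa [lf, Xv, Yv] using congrArg (eval ![0, -1]) h
  · simpa [lf, Xv, Yv] using congrArg (eval ![1, 0]) h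

theorem mem_homogeneousSubmodule_one_iff {q : P2} :
    q ∈ homogeneousSubmodule (Fin 2) ℂ 1 ↔ ∃ a b, q = lf a b := by
  refine ⟨fun hq => ?_, fun ⟨a, b, hq⟩ => hq ▸ lf_isHomogeneous a b⟩
  rw [homogeneousSubmodule_one_eq_span_X, Submodule.mem_span_range_iff_exists_fun] at hq
  obtain ⟨e, rfl⟩ := hq
  refine ⟨-e 1, e 0, ?_⟩
  simp [lf, Xv, Yv, Fin.sum_univ_two, smul_eq_C_mul]

section Pencil

variable {a b c d : ℂ}

theorem linearIndependent_lf_pair (hne : a * d - b * c ≠ 0) :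
    LinearIndependent ℂ ![lf a b, lf c d] := by
  refine LinearIndependent.pair_iff.mpr fun s t hst => ?_
  obtain ⟨h₁, h₂⟩ := lf_eq_zero_iff.mp ((smul_lf_add_smul_lf s t a b c d).symm.trans hst)
  have hs : s * (a * d - b * c) = 0 := by linear_combination d * h₁ - c * h₂
  have ht : t * (a * d - b * c) = 0 := by linear_combination a * h₂ - b * h₁
  exact ⟨(mul_eq_zero.mp hs).resolve_right hne, (mul_eq_zero.mp ht).resolve_right hne⟩

theorem lf_ne_zero_of_det (hne : a * d - b * c ≠ 0) : lf a b ≠ 0 :=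
  (linearIndependent_lf_pair hne).ne_zero 0

theorem span_lf_pair (hne : a * d - b * c ≠ 0) :
    Submodule.span ℂ {lf a b, lf c d} = homogeneousSubmodule (Fin 2) ℂ 1 := by
  refine le_antisymm (Submodule.span_le.mpr ?_) fun q hq => ?_
  · rintro _ (rfl | rfl) <;> exact lf_isHomogeneous _ _
  obtain ⟨x, y, rfl⟩ := mem_homogeneousSubmodule_one_iff.mp hq
  refine Submodule.mem_span_pair.mpr ⟨(x * d - y * c) / (a * d - b * c),
    (y * a - x * b) / (a * d - b * c), ?_⟩
  rw [smul_lf_add_smul_lf]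
  congr 1 <;>
    rw [div_mul_eq_mul_div, div_mul_eq_mul_div, ← add_div, div_eq_iff hne] <;> ring

theorem finrank_span_lf_pair (hne : a * d - b * c ≠ 0) :
    Module.finrank ℂ (Submodule.span ℂ {lf a b, lf c d}) = 2 := by
  rw [← Matrix.range_cons_cons_empty _ _ ![]]
  simp [finrank_span_eq_card (linearIndependent_lf_pair hne)]

end Pencil

theorem cf_add (i j : ℕ) (p q : P2) : cf i j (p + q) = cf i j p + cf i j q :=
  coeff_add _ _ _

theorem cf_C_mul_X_pow_mul_Y_pow (i j k l : ℕ) (r : ℂ) :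
    cf i j (C r * (Xv ^ k * Yv ^ l)) = if k = i ∧ l = j then r else 0 := by
  rw [cf, Xv, Yv, X_pow_eq_monomial, X_pow_eq_monomial, monomial_mul, C_mul_monomial,
    coeff_monomial]
  simp [Finsupp.ext_iff, Fin.forall_fin_two]

theorem lf_sq_mul_lf (x y a b : ℂ) :
    lf a b ^ 2 * lf x y = C (y * b ^ 2) * (Xv ^ 3 * Yv ^ 0)
      + C (-(2 * a * b * y + x * b ^ 2)) * (Xv ^ 2 * Yv ^ 1)
      + C (a ^ 2 * y + 2 * a * b * x) * (Xv ^ 1 * Yv ^ 2)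
      + C (-(a ^ 2 * x)) * (Xv ^ 0 * Yv ^ 3) := by
  simp only [lf, map_add, map_mul, map_neg, map_ofNat, map_pow]
  ring

theorem omegaForm_lf_sq_mul (x y z w a b : ℂ) :
    omegaForm (lf a b ^ 2 * lf x y) (lf a b ^ 2 * lf z w) = 0 := by
  simp only [omegaForm, lf_sq_mul_lf, cf_add, cf_C_mul_X_pow_mul_Y_pow]
  norm_num
  ring

section Lagrangian

variable {a b c d : ℂ}

theorem span_cube_pair_eq_map :
    Submodule.span ℂ {lf a b ^ 3, lf c d * lf a b ^ 2}
      = (Submodule.span ℂ {lf a b, lf c d}).map (LinearMap.mulLeft ℂ (lf a b ^ 2)) := by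
  rw [← Submodule.span_image, Set.image_pair, LinearMap.mulLeft_apply, LinearMap.mulLeft_apply,
    ← pow_succ, mul_comm]

theorem span_cube_pair_eq (hne : a * d - b * c ≠ 0) :
    Submodule.span ℂ {lf a b ^ 3, lf c d * lf a b ^ 2}
      = (homogeneousSubmodule (Fin 2) ℂ 1).map (LinearMap.mulLeft ℂ (lf a b ^ 2)) := by
  rw [span_cube_pair_eq_map, span_lf_pair hne]

theorem mem_span_cube_pair_iff (hne : a * d - b * c ≠ 0) {p : P2} :
    p ∈ Submodule.span ℂ {lf a b ^ 3, lf c d * lf a b ^ 2} ↔ p ∈ Vcubic ∧ lf a b ^ 2 ∣ p := by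
  rw [span_cube_pair_eq hne]
  exact ((lf_isHomogeneous a b).pow 2).mem_map_mulLeft_iff 1

theorem isLagrangian_span_cube_pair (hne : a * d - b * c ≠ 0) :
    IsLagrangian (Submodule.span ℂ {lf a b ^ 3, lf c d * lf a b ^ 2}) := by
  refine ⟨fun p hp => ((mem_span_cube_pair_iff hne).mp hp).1, ?_, ?_⟩
  · have hinj := mul_right_injective₀ (pow_ne_zero 2 (lf_ne_zero_of_det hne))
    rw [span_cube_pair_eq_map]
    exact (Submodule.equivMapOfInjective _ hinj _).finrank_eq.symm.trans (finrank_span_lf_pair hne)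
  · rintro _ hp _ hq
    rw [span_cube_pair_eq hne] at hp hq
    obtain ⟨_, hp, rfl⟩ := hp
    obtain ⟨_, hq, rfl⟩ := hq
    obtain ⟨x, y, rfl⟩ := mem_homogeneousSubmodule_one_iff.mp hp
    obtain ⟨z, w, rfl⟩ := mem_homogeneousSubmodule_one_iff.mp hq
    exact omegaForm_lf_sq_mul x y z w a b

end Lagrangian

theorem statement1_general (a b c d : ℂ)
    (hne : a * d - b * c ≠ 0) :
    ((Submodule.span ℂ {lf a b ^ 3, lf c d * lf a b ^ 2} : Submodule ℂ P2) : Set P2)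
        = {p : P2 | p ∈ Vcubic ∧ lf a b ^ 2 ∣ p} ∧
    (∀ c' d' : ℂ, (c' ≠ 0 ∨ d' ≠ 0) → a * d' - b * c' ≠ 0 →
      Submodule.span ℂ {lf a b ^ 3, lf c d * lf a b ^ 2}
        = Submodule.span ℂ {lf a b ^ 3, lf c' d' * lf a b ^ 2}) ∧
    IsLagrangian (Submodule.span ℂ {lf a b ^ 3, lf c d * lf a b ^ 2}) :=
  ⟨Set.ext fun _ => mem_span_cube_pair_iff hne,
    fun _ _ _ hne' => (span_cube_pair_eq hne).trans (span_cube_pair_eq hne').symm,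
    isLagrangian_span_cube_pair hne⟩

/-- For `[a:b] ∈ ℂℙ¹` and `[c:d] ≠ [a:b]`, the span of `(bX-aY)³` and
`(dX-cY)(bX-aY)²` equals the set of elements of `V` divisible by `(bX-aY)²`; in particular
this span does not depend on the choice of `[c:d]`, and it is a Lagrangian of `V`. -/
theorem statement1 (a b c d : ℂ) (hab : a ≠ 0 ∨ b ≠ 0) (hcd : c ≠ 0 ∨ d ≠ 0)
    (hne : a * d - b * c ≠ 0) :
    ((Submodule.span ℂ {lf a b ^ 3, lf c d * lf a b ^ 2} : Submodule ℂ P2) : Set P2)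
        = {p : P2 | p ∈ Vcubic ∧ lf a b ^ 2 ∣ p} ∧
    (∀ c' d' : ℂ, (c' ≠ 0 ∨ d' ≠ 0) → a * d' - b * c' ≠ 0 →
      Submodule.span ℂ {lf a b ^ 3, lf c d * lf a b ^ 2}
        = Submodule.span ℂ {lf a b ^ 3, lf c' d' * lf a b ^ 2}) ∧
    IsLagrangian (Submodule.span ℂ {lf a b ^ 3, lf c d * lf a b ^ 2}) :=
  statement1_general a b c d hne
end
end

section
/- The SL(2,ℂ)-orbit of the Lagrangian span{X³, XY²} is exactly the set of Lagrangians W of V such that there exists [a:b] ∈ ℂℙ¹ with bX − aY dividing every element of W, but there exists no [a':b'] ∈ ℂℙ¹ with (b'X − a'Y)² dividing every element of W. -/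
noncomputable section

open MvPolynomial

/-- The Lagrangian `span{X³, X²Y}`. -/
def L₁ : Submodule ℂ P2 := Submodule.span ℂ {Xv ^ 3, Xv ^ 2 * Yv}

/-- The Lagrangian `span{X³, XY²}`. -/
def L₂ : Submodule ℂ P2 := Submodule.span ℂ {Xv ^ 3, Xv * Yv ^ 2}

/-- The Lagrangian `span{X²Y, X³ + Y³}`. -/
def L₃ : Submodule ℂ P2 := Submodule.span ℂ {Xv ^ 2 * Yv, Xv ^ 3 + Yv ^ 3}

/-! `SL(2,ℂ)` preserves `V`, `ω`, and the property that all elements of a subspace share a root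
of multiplicity at least `n`; since `L₂ = span{X³, XY²}` is a Lagrangian with the common root
`[0:1]` and no common double root, so is every element of its orbit.

Conversely, move the common root of `W` to `[0:1]`, so that `W ⊆ span{X³, X²Y, XY²}`. There `ω`
only sees the `X²Y`, `XY²` coordinates, a symplectic plane, so the isotropic plane `W` contains
`X³` and hence `W = span{X³, βX²Y + γXY²}`. If `γ = 0` then `X²` would divide all of `W`; otherwise
`W = span{X³, X(kX + Y)²}` with `k = β/(2γ)`, the image of `L₂` under `Y ↦ kX + Y`. -/

open scoped MatrixGroups

def cubic (α β γ δ : ℂ) : P2 :=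
  C α * Xv ^ 3 + C β * (Xv ^ 2 * Yv) + C γ * (Xv * Yv ^ 2) + C δ * Yv ^ 3

lemma cubic_eq_sum_monomial (α β γ δ : ℂ) :
    cubic α β γ δ =
      monomial (Finsupp.single 0 3) α
      + monomial (Finsupp.single 0 2 + Finsupp.single 1 1) β
      + monomial (Finsupp.single 0 1 + Finsupp.single 1 2) γ
      + monomial (Finsupp.single 1 3) δ := by
  simp [cubic, Xv, Yv, X, C_mul_monomial, monomial_mul, monomial_pow, Finsupp.smul_single]

lemma cf_cubic (α β γ δ : ℂ) (i j : ℕ) :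
    cf i j (cubic α β γ δ) =
      (if 3 = i ∧ 0 = j then α else 0) + (if 2 = i ∧ 1 = j then β else 0)
        + (if 1 = i ∧ 2 = j then γ else 0) + (if 0 = i ∧ 3 = j then δ else 0) := by
  rw [cubic_eq_sum_monomial]
  simp [cf, coeff_monomial, Finsupp.ext_iff, Fin.forall_fin_two, Finsupp.single_apply]

@[simp] lemma cf_cubic_30 (α β γ δ : ℂ) : cf 3 0 (cubic α β γ δ) = α := by simp [cf_cubic]
@[simp] lemma cf_cubic_21 (α β γ δ : ℂ) : cf 2 1 (cubic α β γ δ) = β := by simp [cf_cubic]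
@[simp] lemma cf_cubic_12 (α β γ δ : ℂ) : cf 1 2 (cubic α β γ δ) = γ := by simp [cf_cubic]
@[simp] lemma cf_cubic_03 (α β γ δ : ℂ) : cf 0 3 (cubic α β γ δ) = δ := by simp [cf_cubic]

lemma cubic_mem_Vcubic (α β γ δ : ℂ) : cubic α β γ δ ∈ Vcubic := by
  rw [cubic_eq_sum_monomial]
  refine add_mem (add_mem (add_mem ?_ ?_) ?_) ?_ <;>
    exact (mem_homogeneousSubmodule _ _).mpr (isHomogeneous_monomial _ (by simp))

lemma eq_cubic_of_mem_Vcubic {p : P2} (hp : p ∈ Vcubic) :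
    p = cubic (cf 3 0 p) (cf 2 1 p) (cf 1 2 p) (cf 0 3 p) := by
  ext m
  obtain ⟨i, j, rfl⟩ : ∃ i j : ℕ, m = Finsupp.single 0 i + Finsupp.single 1 j :=
    ⟨m 0, m 1, by ext k; fin_cases k <;> simp⟩
  change cf i j p = cf i j _
  rw [cf_cubic]
  by_cases hij : i + j = 3
  · obtain ⟨rfl, rfl⟩ | ⟨rfl, rfl⟩ | ⟨rfl, rfl⟩ | ⟨rfl, rfl⟩ :
        (i = 3 ∧ j = 0) ∨ (i = 2 ∧ j = 1) ∨ (i = 1 ∧ j = 2) ∨ (i = 0 ∧ j = 3) := by omega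
    all_goals simp
  · rw [cf, ((mem_homogeneousSubmodule _ _).mp hp).coeff_eq_zero (by simpa using hij)]
    rw [if_neg (by omega), if_neg (by omega), if_neg (by omega), if_neg (by omega)]
    simp

lemma cubic_add (α β γ δ α' β' γ' δ' : ℂ) :
    cubic α β γ δ + cubic α' β' γ' δ' = cubic (α + α') (β + β') (γ + γ') (δ + δ') := by
  simp only [cubic, map_add]; ring

lemma cubic_sub (α β γ δ α' β' γ' δ' : ℂ) :
    cubic α β γ δ - cubic α' β' γ' δ' = cubic (α - α') (β - β') (γ - γ') (δ - δ') := by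
  simp only [cubic, map_sub]; ring

lemma smul_cubic (c α β γ δ : ℂ) :
    c • cubic α β γ δ = cubic (c * α) (c * β) (c * γ) (c * δ) := by
  simp only [smul_eq_C_mul, cubic, map_mul]; ring

@[simp] lemma cf_zero (i j : ℕ) : cf i j 0 = 0 := coeff_zero _

lemma omegaForm_cubic (α β γ δ α' β' γ' δ' : ℂ) :
    omegaForm (cubic α β γ δ) (cubic α' β' γ' δ') =
      α * δ' - δ * α' - (1 / 3) * (β * γ' - γ * β') := by
  simp [omegaForm]

lemma eval_cubic (u v α β γ δ : ℂ) :
    eval ![u, v] (cubic α β γ δ) = α * u ^ 3 + β * (u ^ 2 * v) + γ * (u * v ^ 2) + δ * v ^ 3 := by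
  simp [cubic, Xv, Yv]

lemma det_fin_two_coe (g : SL(2, ℂ)) : g.1 0 0 * g.1 1 1 - g.1 0 1 * g.1 1 0 = 1 := by
  rw [← Matrix.det_fin_two]; exact g.2

lemma subst_X (g : SL(2, ℂ)) (i : Fin 2) :
    subst g (X i) = C (g.1 i 0) * Xv + C (g.1 i 1) * Yv := by
  simp [subst]

lemma subst_Xv (g : SL(2, ℂ)) : subst g Xv = C (g.1 0 0) * Xv + C (g.1 0 1) * Yv := subst_X g 0

lemma subst_Yv (g : SL(2, ℂ)) : subst g Yv = C (g.1 1 0) * Xv + C (g.1 1 1) * Yv := subst_X g 1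

lemma subst_C (g : SL(2, ℂ)) (r : ℂ) : subst g (C r) = C r := by
  simp [subst, algebraMap_eq]

lemma subst_subst (g h : SL(2, ℂ)) (p : P2) : subst g (subst h p) = subst (h * g) p := by
  suffices (subst g).comp (subst h) = subst (h * g) from DFunLike.congr_fun this p
  refine MvPolynomial.algHom_ext fun i => ?_
  simp only [AlgHom.coe_comp, Function.comp_apply, subst_X, map_add, map_mul, subst_Xv,
    subst_Yv, subst_C, Matrix.SpecialLinearGroup.coe_mul, Matrix.mul_apply, Fin.sum_univ_two]
  ring

lemma subst_one (p : P2) : subst 1 p = p := by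
  suffices subst 1 = AlgHom.id ℂ P2 from DFunLike.congr_fun this p
  refine MvPolynomial.algHom_ext fun i => ?_
  fin_cases i <;> simp [subst_X, Xv, Yv]

lemma subst_inv_subst (g : SL(2, ℂ)) (p : P2) : subst g⁻¹ (subst g p) = p := by
  rw [subst_subst, mul_inv_cancel, subst_one]

lemma mapAct_mapAct (g h : SL(2, ℂ)) (W : Submodule ℂ P2) :
    mapAct g (mapAct h W) = mapAct (h * g) W := by
  rw [mapAct, mapAct, mapAct, ← Submodule.map_comp]
  exact congrArg (Submodule.map · W) (LinearMap.ext fun p => subst_subst g h p)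

lemma mapAct_inv_mapAct (g : SL(2, ℂ)) (W : Submodule ℂ P2) : mapAct g⁻¹ (mapAct g W) = W := by
  have : (subst 1).toLinearMap = LinearMap.id := LinearMap.ext fun p => subst_one p
  rw [mapAct_mapAct, mul_inv_cancel, mapAct, this, Submodule.map_id]

lemma finrank_mapAct (g : SL(2, ℂ)) (W : Submodule ℂ P2) :
    Module.finrank ℂ (mapAct g W) = Module.finrank ℂ W :=
  (LinearEquiv.finrank_eq (Submodule.equivMapOfInjective (subst g).toLinearMap
    (Function.LeftInverse.injective (g := subst g⁻¹) (subst_inv_subst g)) W)).symm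

lemma subst_cubic (g : SL(2, ℂ)) (α β γ δ : ℂ) :
    subst g (cubic α β γ δ) =
      cubic (α * g.1 0 0 ^ 3 + β * g.1 0 0 ^ 2 * g.1 1 0 + γ * g.1 0 0 * g.1 1 0 ^ 2
              + δ * g.1 1 0 ^ 3)
            (3 * α * g.1 0 0 ^ 2 * g.1 0 1
              + β * (g.1 0 0 ^ 2 * g.1 1 1 + 2 * g.1 0 0 * g.1 0 1 * g.1 1 0)
              + γ * (2 * g.1 0 0 * g.1 1 0 * g.1 1 1 + g.1 0 1 * g.1 1 0 ^ 2)
              + 3 * δ * g.1 1 0 ^ 2 * g.1 1 1)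
            (3 * α * g.1 0 0 * g.1 0 1 ^ 2
              + β * (2 * g.1 0 0 * g.1 0 1 * g.1 1 1 + g.1 0 1 ^ 2 * g.1 1 0)
              + γ * (g.1 0 0 * g.1 1 1 ^ 2 + 2 * g.1 0 1 * g.1 1 0 * g.1 1 1)
              + 3 * δ * g.1 1 0 * g.1 1 1 ^ 2)
            (α * g.1 0 1 ^ 3 + β * g.1 0 1 ^ 2 * g.1 1 1 + γ * g.1 0 1 * g.1 1 1 ^ 2
              + δ * g.1 1 1 ^ 3) := by
  simp only [cubic, map_add, map_mul, map_pow, subst_C, subst_Xv, subst_Yv, map_ofNat]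
  ring

lemma subst_mem_Vcubic (g : SL(2, ℂ)) {p : P2} (hp : p ∈ Vcubic) : subst g p ∈ Vcubic := by
  rw [eq_cubic_of_mem_Vcubic hp, subst_cubic]
  exact cubic_mem_Vcubic _ _ _ _

-- For any `g ∈ GL(2,ℂ)` the form is multiplied by `det g ^ 3`.
lemma omegaForm_subst_cubic (g : SL(2, ℂ)) (α β γ δ α' β' γ' δ' : ℂ) :
    omegaForm (subst g (cubic α β γ δ)) (subst g (cubic α' β' γ' δ')) =
      omegaForm (cubic α β γ δ) (cubic α' β' γ' δ') := by
  rw [subst_cubic, subst_cubic, omegaForm_cubic, omegaForm_cubic]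
  set d := g.1 0 0 * g.1 1 1 - g.1 0 1 * g.1 1 0
  linear_combination
    (d ^ 2 + d + 1) * (α * δ' - δ * α' - (1 / 3) * (β * γ' - γ * β')) * det_fin_two_coe g

lemma omegaForm_subst (g : SL(2, ℂ)) {p q : P2} (hp : p ∈ Vcubic) (hq : q ∈ Vcubic) :
    omegaForm (subst g p) (subst g q) = omegaForm p q := by
  rw [eq_cubic_of_mem_Vcubic hp, eq_cubic_of_mem_Vcubic hq]
  exact omegaForm_subst_cubic g _ _ _ _ _ _ _ _

lemma IsLagrangian.mapAct {W : Submodule ℂ P2} (hW : IsLagrangian W) (g : SL(2, ℂ)) :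
    IsLagrangian (mapAct g W) := by
  obtain ⟨hV, hrank, hω⟩ := hW
  refine ⟨?_, (finrank_mapAct g W).trans hrank, ?_⟩
  · rintro _ ⟨p, hp, rfl⟩
    exact subst_mem_Vcubic g (hV hp)
  · rintro _ ⟨p, hp, rfl⟩ _ ⟨q, hq, rfl⟩
    exact (omegaForm_subst g (hV hp) (hV hq)).trans (hω p hp q hq)

def HasCommonRootOfMult (n : ℕ) (W : Submodule ℂ P2) : Prop :=
  ∃ a b : ℂ, (a ≠ 0 ∨ b ≠ 0) ∧ ∀ p ∈ W, lf a b ^ n ∣ p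

lemma subst_lf (g : SL(2, ℂ)) (a b : ℂ) :
    subst g (lf a b) = lf (a * g.1 1 1 - b * g.1 0 1) (b * g.1 0 0 - a * g.1 1 0) := by
  simp only [lf, map_sub, map_mul, subst_C, subst_Xv, subst_Yv]
  ring

lemma HasCommonRootOfMult.mapAct {n : ℕ} {W : Submodule ℂ P2} (hW : HasCommonRootOfMult n W)
    (g : SL(2, ℂ)) : HasCommonRootOfMult n (mapAct g W) := by
  obtain ⟨a, b, hab, hdvd⟩ := hW
  refine ⟨a * g.1 1 1 - b * g.1 0 1, b * g.1 0 0 - a * g.1 1 0, ?_, ?_⟩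
  · by_contra! h
    have hdet := det_fin_two_coe g
    rcases hab with ha | hb
    · exact ha (by linear_combination g.1 0 0 * h.1 + g.1 0 1 * h.2 - a * hdet)
    · exact hb (by linear_combination g.1 1 0 * h.1 + g.1 1 1 * h.2 - b * hdet)
  · rintro _ ⟨p, hp, rfl⟩
    rw [← subst_lf, ← map_pow]
    exact map_dvd (subst g) (hdvd p hp)

lemma hasCommonRootOfMult_mapAct_iff {n : ℕ} {W : Submodule ℂ P2} (g : SL(2, ℂ)) :
    HasCommonRootOfMult n (mapAct g W) ↔ HasCommonRootOfMult n W :=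
  ⟨fun h => by simpa only [mapAct_inv_mapAct] using h.mapAct g⁻¹, fun h => h.mapAct g⟩

lemma lf_zero_one : lf 0 1 = Xv := by simp [lf]

lemma exists_subst_lf_eq_Xv {a b : ℂ} (hab : a ≠ 0 ∨ b ≠ 0) :
    ∃ g : SL(2, ℂ), subst g (lf a b) = Xv := by
  obtain ⟨u, v, huv⟩ : ∃ u v : ℂ, u * b - a * v = 1 := by
    rcases ne_or_eq b 0 with hb | rfl
    · exact ⟨b⁻¹, 0, by field_simp; ring⟩
    · have ha : a ≠ 0 := by simpa using hab
      exact ⟨0, -a⁻¹, by simp [ha]⟩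
  refine ⟨⟨!![u, a; v, b], by simpa [Matrix.det_fin_two_of] using huv⟩, (subst_lf _ a b).trans ?_⟩
  rw [← lf_zero_one]
  congr 1
  · simp [mul_comm]
  · simpa [mul_comm] using huv

lemma eval_eq_zero_of_lf_dvd {a b : ℂ} {p : P2} (h : lf a b ∣ p) : eval ![a, b] p = 0 := by
  obtain ⟨r, rfl⟩ := h
  simp [lf, Xv, Yv, mul_comm]

lemma eval_pderiv_eq_zero_of_lf_sq_dvd {a b : ℂ} {p : P2} (h : lf a b ^ 2 ∣ p) (i : Fin 2) :
    eval ![a, b] (pderiv i p) = 0 := by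
  obtain ⟨r, rfl⟩ := h
  apply eval_eq_zero_of_lf_dvd
  rw [pow_two, mul_assoc, pderiv_mul]
  exact dvd_add (dvd_mul_of_dvd_right (dvd_mul_right _ _) _) (dvd_mul_right _ _)

lemma Xv_pow_three_eq_cubic : Xv ^ 3 = cubic 1 0 0 0 := by simp [cubic]

lemma Xv_mul_Yv_sq_eq_cubic : Xv * Yv ^ 2 = cubic 0 0 1 0 := by simp [cubic]

lemma mem_L₂_iff {p : P2} : p ∈ L₂ ↔ ∃ s t : ℂ, p = cubic s 0 t 0 := by
  simp only [L₂, Submodule.mem_span_pair, Xv_pow_three_eq_cubic, Xv_mul_Yv_sq_eq_cubic,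
    smul_cubic, cubic_add]
  simp [eq_comm]

lemma finrank_L₂ : Module.finrank ℂ L₂ = 2 := by
  rw [L₂, ← Matrix.range_cons_cons_empty, finrank_span_eq_card, Fintype.card_fin]
  refine LinearIndependent.pair_iff.mpr fun s t hst => ?_
  rw [Xv_pow_three_eq_cubic, Xv_mul_Yv_sq_eq_cubic, smul_cubic, smul_cubic, cubic_add] at hst
  exact ⟨by simpa using congrArg (cf 3 0) hst, by simpa using congrArg (cf 1 2) hst⟩

lemma isLagrangian_L₂ : IsLagrangian L₂ := by
  refine ⟨fun p hp => ?_, finrank_L₂, fun p hp q hq => ?_⟩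
  · obtain ⟨s, t, rfl⟩ := mem_L₂_iff.mp hp
    exact cubic_mem_Vcubic _ _ _ _
  · obtain ⟨s, t, rfl⟩ := mem_L₂_iff.mp hp
    obtain ⟨s', t', rfl⟩ := mem_L₂_iff.mp hq
    rw [omegaForm_cubic]
    ring

lemma hasCommonRootOfMult_one_L₂ : HasCommonRootOfMult 1 L₂ := by
  refine ⟨0, 1, by simp, fun p hp => ?_⟩
  obtain ⟨s, t, rfl⟩ := mem_L₂_iff.mp hp
  rw [pow_one, lf_zero_one]
  exact ⟨C s * Xv ^ 2 + C t * Yv ^ 2, by simp only [cubic, map_zero]; ring⟩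

lemma not_hasCommonRootOfMult_two_L₂ : ¬ HasCommonRootOfMult 2 L₂ := by
  rintro ⟨a, b, hab, hdvd⟩
  have hX3 := hdvd (Xv ^ 3) (Submodule.subset_span (by simp))
  have hXY2 := hdvd (Xv * Yv ^ 2) (Submodule.subset_span (by simp))
  have ha : a ^ 3 = 0 := by
    simpa [Xv] using eval_eq_zero_of_lf_dvd ((dvd_pow_self _ two_ne_zero).trans hX3)
  have hb : b ^ 2 = 0 := by
    simpa [Xv, Yv, pderiv_X] using eval_pderiv_eq_zero_of_lf_sq_dvd hXY2 0
  simp_all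

lemma exists_eq_cubic_of_Xv_dvd {p : P2} (hp : p ∈ Vcubic) (hX : Xv ∣ p) :
    ∃ α β γ : ℂ, p = cubic α β γ 0 := by
  have h03 : cf 0 3 p = 0 := by
    have := eval_eq_zero_of_lf_dvd (lf_zero_one ▸ hX)
    rw [eq_cubic_of_mem_Vcubic hp, eval_cubic] at this
    simpa using this
  exact ⟨_, _, _, h03 ▸ eq_cubic_of_mem_Vcubic hp⟩

lemma Xv_pow_three_mem {W : Submodule ℂ P2} (hrank : Module.finrank ℂ W = 2)
    (hω : ∀ p ∈ W, ∀ q ∈ W, omegaForm p q = 0) (hform : ∀ p ∈ W, ∃ α β γ : ℂ, p = cubic α β γ 0)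
    {α β γ : ℂ} (hγ : γ ≠ 0) (hq : cubic α β γ 0 ∈ W) : Xv ^ 3 ∈ W := by
  obtain ⟨p, hp, hpq⟩ : ∃ p ∈ W, p ∉ ℂ ∙ cubic α β γ 0 := by
    by_contra! h
    have := (Submodule.finrank_mono h).trans (finrank_span_le_card {cubic α β γ 0})
    simp_all
  obtain ⟨α', β', γ', rfl⟩ := hform p hp
  have hβ : β' * γ - γ' * β = 0 := by
    have := hω _ hp _ hq
    rw [omegaForm_cubic] at this
    linear_combination -3 * this
  have hr : cubic α' β' γ' 0 - (γ' / γ) • cubic α β γ 0 = (α' - γ' / γ * α) • Xv ^ 3 := by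
    rw [Xv_pow_three_eq_cubic, smul_cubic, smul_cubic, cubic_sub]
    congr 1 <;> field_simp
    · linear_combination hβ
    all_goals ring
  have hne : α' - γ' / γ * α ≠ 0 := by
    intro h0
    rw [h0, zero_smul, sub_eq_zero] at hr
    exact hpq (hr ▸ Submodule.smul_mem _ _ (Submodule.mem_span_singleton_self _))
  rw [← Submodule.smul_mem_iff W hne, ← hr]
  exact W.sub_mem hp (W.smul_mem _ hq)

/-- The substitution `X ↦ X, Y ↦ k X + Y`. -/
def shear (k : ℂ) : SL(2, ℂ) := ⟨!![1, 0; k, 1], by simp [Matrix.det_fin_two_of]⟩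

lemma mapAct_shear_L₂ (k : ℂ) :
    mapAct (shear k) L₂ = Submodule.span ℂ {Xv ^ 3, cubic (k ^ 2) (2 * k) 1 0} := by
  have hX : subst (shear k) Xv = Xv := (subst_Xv _).trans (by simp [shear])
  have hY : subst (shear k) Yv = C k * Xv + Yv := (subst_Yv _).trans (by simp [shear])
  rw [mapAct, L₂, Submodule.map_span, Set.image_pair]
  congr 3
  · simp [hX]
  · simp only [AlgHom.toLinearMap_apply, map_mul, map_pow, hX, hY, cubic, map_ofNat, map_one,
      map_zero, map_pow, map_mul]
    ring

lemma mem_slOrbit_L₂_of_Xv_dvd {W : Submodule ℂ P2} (hW : IsLagrangian W)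
    (hX : ∀ p ∈ W, Xv ∣ p) (hW2 : ¬ HasCommonRootOfMult 2 W) : W ∈ slOrbit L₂ := by
  obtain ⟨hV, hrank, hω⟩ := hW
  have hform (p : P2) (hp : p ∈ W) : ∃ α β γ : ℂ, p = cubic α β γ 0 :=
    exists_eq_cubic_of_Xv_dvd (hV hp) (hX p hp)
  obtain ⟨α, β, γ, hγ, hq⟩ : ∃ α β γ : ℂ, γ ≠ 0 ∧ cubic α β γ 0 ∈ W := by
    by_contra! h
    refine hW2 ⟨0, 1, by simp, fun p hp => ?_⟩
    obtain ⟨α, β, γ, rfl⟩ := hform p hp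
    obtain rfl : γ = 0 := by_contra fun hγ => h α β γ hγ hp
    rw [lf_zero_one]
    exact ⟨C α * Xv + C β * Yv, by simp only [cubic, map_zero]; ring⟩
  have hX3 := Xv_pow_three_mem hrank hω hform hγ hq
  obtain ⟨k, rfl⟩ : ∃ k, β = 2 * k * γ := ⟨β / (2 * γ), by field_simp⟩
  have hk : cubic (k ^ 2) (2 * k) 1 0 ∈ W := by
    have : cubic (k ^ 2) (2 * k) 1 0 =
        γ⁻¹ • cubic α (2 * k * γ) γ 0 + (k ^ 2 - α / γ) • Xv ^ 3 := by
      rw [Xv_pow_three_eq_cubic, smul_cubic, smul_cubic, cubic_add]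
      congr 1 <;> field_simp <;> ring
    rw [this]
    exact add_mem (W.smul_mem _ hq) (W.smul_mem _ hX3)
  have : FiniteDimensional ℂ W := Module.finite_of_finrank_eq_succ hrank
  refine ⟨shear k, (Submodule.eq_of_le_of_finrank_eq ?_ ?_).symm⟩
  · rw [mapAct_shear_L₂, Submodule.span_le, Set.insert_subset_iff, Set.singleton_subset_iff]
    exact ⟨hX3, hk⟩
  · rw [finrank_mapAct, finrank_L₂, hrank]

lemma mem_slOrbit_L₂ {W : Submodule ℂ P2} (hW : IsLagrangian W)
    (h1 : HasCommonRootOfMult 1 W) (h2 : ¬ HasCommonRootOfMult 2 W) : W ∈ slOrbit L₂ := by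
  obtain ⟨a, b, hab, hdvd⟩ := h1
  obtain ⟨g, hg⟩ := exists_subst_lf_eq_Xv hab
  have hX : ∀ p ∈ mapAct g W, Xv ∣ p := by
    rintro _ ⟨p, hp, rfl⟩
    rw [← hg]
    exact map_dvd (subst g) (pow_one (lf a b) ▸ hdvd p hp)
  obtain ⟨g', hg'⟩ := mem_slOrbit_L₂_of_Xv_dvd (hW.mapAct g) hX
    ((hasCommonRootOfMult_mapAct_iff g).not.mpr h2)
  exact ⟨g' * g⁻¹, by rw [← mapAct_mapAct, ← hg', mapAct_inv_mapAct]⟩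

/-- The `SL(2,ℂ)`-orbit of `span{X³, XY²}` is exactly the set of
Lagrangians `W` of `V` whose elements share a common root but do not share a common double
root. -/
theorem statement7 :
    slOrbit L₂ =
      {W : Submodule ℂ P2 | IsLagrangian W ∧
        (∃ a b : ℂ, (a ≠ 0 ∨ b ≠ 0) ∧ ∀ p ∈ W, lf a b ∣ p) ∧
        ¬ ∃ a' b' : ℂ, (a' ≠ 0 ∨ b' ≠ 0) ∧ ∀ p ∈ W, lf a' b' ^ 2 ∣ p} := by
  ext W
  have key : W ∈ slOrbit L₂ ↔
      IsLagrangian W ∧ HasCommonRootOfMult 1 W ∧ ¬ HasCommonRootOfMult 2 W :=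
    ⟨by
      rintro ⟨g, rfl⟩
      exact ⟨isLagrangian_L₂.mapAct g, hasCommonRootOfMult_one_L₂.mapAct g,
        (hasCommonRootOfMult_mapAct_iff g).not.mpr not_hasCommonRootOfMult_two_L₂⟩,
      fun ⟨hW, h1, h2⟩ => mem_slOrbit_L₂ hW h1 h2⟩
  simpa only [Set.mem_ofPred_eq, HasCommonRootOfMult, pow_one] using key
end
end
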